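/- arXiv:1205.0716 — 3 statements merged into one kernel-verified Lean document; each statement's English description precedes it below -/
import Mathlib

section
/- For all i, j ∈ {1,…,4}, the fundamental metrical d-tensor of the (t,x)-conformal deformed quartic Berwald-Moór Hamiltonian satisfies (h¹¹(t)/2) · ∂²H*/∂p_i∂p_j (t,x,p) = (e^{−2σ(x)} (1 − 2δ^{ij})/2) · 𝒫^{1/2}/(p_i p_j), where the partial derivatives are taken with respect to the momentum variables p_i, p_j (no summation over i or j). -/
/-- Partial derivative of `f : (Fin 4 → ℝ) → ℝ` with respect to the `i`-th coordinate. -/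
noncomputable def pd (f : (Fin 4 → ℝ) → ℝ) (i : Fin 4) (v : Fin 4 → ℝ) : ℝ :=
  deriv (fun s => f (Function.update v i s)) (v i)

/-- Kronecker delta. -/
noncomputable def kron (i j : Fin 4) : ℝ := if i = j then 1 else 0

lemma pd_sqrt (c : ℝ) (j : Fin 4) (v : Fin 4 → ℝ) (hv : ∀ k, 0 < v k) :
    pd (fun q => c * Real.sqrt (∏ k, q k)) j v
      = c * Real.sqrt (∏ k, v k) / (2 * v j) := by
  unfold pd
  have hrw : ∀ s, (∏ k, Function.update v j s k)
      = s * ∏ k ∈ Finset.univ \ {j}, v k := fun s =>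
    Finset.prod_update_of_mem (Finset.mem_univ j) v s
  simp only [hrw]
  set P := ∏ k ∈ Finset.univ \ {j}, v k with hPdef
  have hPpos : (0:ℝ) < P := Finset.prod_pos (fun k _ => hv k)
  have hvj := hv j
  have hd : HasDerivAt (fun s : ℝ => c * Real.sqrt (s * P))
      (c * (P / (2 * Real.sqrt (v j * P)))) (v j) := by
    have h1 : HasDerivAt (fun s : ℝ => s * P) P (v j) := by
      simpa using (hasDerivAt_id (v j)).mul_const P
    have h2 := (h1.sqrt (by positivity)).const_mul c
    simpa using h2
  rw [hd.deriv]
  have hprod : (∏ k, v k) = v j * P :=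
    Finset.prod_eq_mul_prod_sdiff_singleton_of_mem (Finset.mem_univ j) v
  rw [hprod]
  set S := Real.sqrt (v j * P) with hSdef
  have hS2 : S ^ 2 = v j * P := Real.sq_sqrt (by positivity)
  have hSpos : 0 < S := Real.sqrt_pos.mpr (by positivity)
  have hP' : P = S ^ 2 / v j := by field_simp [hS2]; rw [hS2]; ring
  rw [hP']
  field_simp

/-- the fundamental metrical d-tensor of the (t,x)-conformal deformed
quartic Berwald-Moór Hamiltonian `H* = 4 e^{-2σ(x)} h₁₁(t) 𝒫^{1/2}` satisfies
`(h¹¹/2) ∂²H*/∂p_i∂p_j = (e^{-2σ}(1-2δ^{ij})/2) 𝒫^{1/2}/(p_i p_j)`. -/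
theorem stmt_0 (σ : (Fin 4 → ℝ) → ℝ) (hσ : ContDiff ℝ (⊤ : ℕ∞) σ)
    (h : ℝ → ℝ) (hh : ContDiff ℝ (⊤ : ℕ∞) h) (hhpos : ∀ t, 0 < h t)
    (t : ℝ) (x p : Fin 4 → ℝ) (hp : ∀ i, 0 < p i) (i j : Fin 4) :
    ((h t)⁻¹ / 2) *
      pd (fun q =>
        pd (fun q' => 4 * Real.exp (-2 * σ x) * h t * Real.sqrt (∏ k, q' k)) j q) i p =
    Real.exp (-2 * σ x) * (1 - 2 * kron i j) / 2 * Real.sqrt (∏ k, p k) / (p i * p j) := by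
  set E := Real.exp (-2 * σ x) with hE
  have hEpos : 0 < E := Real.exp_pos _
  have hht := hhpos t
  set c := 4 * E * h t with hc
  have hcpos : 0 < c := by positivity
  have hEq : (fun s => pd (fun q' => c * Real.sqrt (∏ k, q' k)) j (Function.update p i s))
      =ᶠ[nhds (p i)]
      (fun s => c * Real.sqrt (∏ k, Function.update p i s k) /
        (2 * Function.update p i s j)) := by
    filter_upwards [eventually_gt_nhds (hp i)] with s hs
    refine pd_sqrt c j _ (fun k => ?_)
    rcases eq_or_ne k i with rfl | hk
    · simpa using hs
    · simpa [Function.update_apply, hk] using hp k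
  have hpd : pd (fun q => pd (fun q' => c * Real.sqrt (∏ k, q' k)) j q) i p
      = deriv (fun s => pd (fun q' => c * Real.sqrt (∏ k, q' k)) j (Function.update p i s)) (p i) := rfl
  rw [hpd, hEq.deriv_eq]
  have hrw : ∀ s, (∏ k, Function.update p i s k)
      = s * ∏ k ∈ Finset.univ \ {i}, p k := fun s =>
    Finset.prod_update_of_mem (Finset.mem_univ i) p s
  set P := ∏ k ∈ Finset.univ \ {i}, p k with hPdef
  have hPpos : (0:ℝ) < P := Finset.prod_pos (fun k _ => hp k)
  have hpi := hp i
  have hpj := hp j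
  have hprod : (∏ k, p k) = p i * P :=
    Finset.prod_eq_mul_prod_sdiff_singleton_of_mem (Finset.mem_univ i) p
  set S := Real.sqrt (p i * P) with hSdef
  have hS2 : S ^ 2 = p i * P := Real.sq_sqrt (by positivity)
  have hSpos : 0 < S := Real.sqrt_pos.mpr (by positivity)
  have hP' : P = S ^ 2 / p i := by field_simp [hS2]; rw [hS2]; ring
  have h1 : HasDerivAt (fun s : ℝ => c * Real.sqrt (s * P))
      (c * (P / (2 * S))) (p i) := by
    have h1' : HasDerivAt (fun s : ℝ => s * P) P (p i) := by
      simpa using (hasDerivAt_id (p i)).mul_const P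
    have h2 := (h1'.sqrt (by positivity)).const_mul c
    simpa using h2
  rcases eq_or_ne i j with rfl | hij
  · -- i = j case
    simp only [hrw, Function.update_self]
    have h2 : HasDerivAt (fun s : ℝ => (2:ℝ) * s) 2 (p i) := by
      simpa using (hasDerivAt_id (p i)).const_mul (2:ℝ)
    have hdiv := h1.div h2 (by positivity)
    rw [HasDerivAt.deriv (f := fun s : ℝ => c * Real.sqrt (s * P) / (2 * s)) hdiv]
    rw [hprod, ← hSdef]
    simp only [kron, if_pos rfl, ↓reduceIte]
    rw [hP']
    field_simp
    rw [hc]; ring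
  · -- i ≠ j case
    have hupd : ∀ s : ℝ, Function.update p i s j = p j := fun s =>
      Function.update_of_ne (Ne.symm hij) s p
    simp only [hrw, hupd]
    have hdiv := h1.div_const (2 * p j)
    rw [hdiv.deriv]
    rw [hprod, ← hSdef]
    simp only [kron, if_neg hij]
    rw [hP']
    field_simp
    ring
end

section
/- For all i, j ∈ {1,…,4}, the spatial component of the canonical nonlinear connection of the (t,x)-conformal deformed quartic Berwald-Moór Hamiltonian, defined by N_{(i)j}^{(1)} := (h¹¹/4) Σ_{k=1}^{4} [ (∂g_{ij}/∂x^k)(∂H*/∂p_k) − (∂g_{ij}/∂p_k)(∂H*/∂x^k) + g_{ik} ∂²H*/∂x^j∂p_k + g_{jk} ∂²H*/∂x^i∂p_k ], equals −4 σ_i(x) p_i δ_{ij} (no summation over i, j on the right-hand side). -/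
/-- The covariant metrical d-tensor `g_{jk} = (e^{2σ(x)}(1-2δ_{jk})/2) p_j p_k 𝒫^{-1/2}`. -/
noncomputable def gdown (σ : (Fin 4 → ℝ) → ℝ) (x p : Fin 4 → ℝ) (j k : Fin 4) : ℝ :=
  Real.exp (2 * σ x) * (1 - 2 * kron j k) / 2 * p j * p k / Real.sqrt (∏ m, p m)

/-- The Hamiltonian `H*(t,x,p) = 4 e^{-2σ(x)} h₁₁(t) 𝒫^{1/2}`. -/
noncomputable def Hstar (σ : (Fin 4 → ℝ) → ℝ) (h : ℝ → ℝ) (t : ℝ) (x p : Fin 4 → ℝ) : ℝ :=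
  4 * Real.exp (-2 * σ x) * h t * Real.sqrt (∏ m, p m)

lemma hasDerivAt_update_apply (p : Fin 4 → ℝ) (k i : Fin 4) :
    HasDerivAt (fun s => Function.update p k s i) (kron k i) (p k) := by
  rcases eq_or_ne i k with rfl | hik
  · simpa [kron, Function.update_self] using hasDerivAt_id' (p i)
  · simpa [kron, Function.update_of_ne hik, Ne.symm hik] using hasDerivAt_const (p k) (p i)

lemma hasDerivAt_sqrtProd (p : Fin 4 → ℝ) (hp : ∀ i, 0 < p i) (k : Fin 4) :
    HasDerivAt (fun s => Real.sqrt (∏ m, Function.update p k s m))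
      (Real.sqrt (∏ m, p m) / (2 * p k)) (p k) := by
  set c := ∏ m ∈ Finset.univ \ {k}, p m with hc
  have hcpos : 0 < c := Finset.prod_pos fun m _ => hp m
  have hprod : ∀ s : ℝ, (∏ m, Function.update p k s m) = s * c := fun s =>
    Finset.prod_update_of_mem (Finset.mem_univ k) p s
  have hP : (∏ m, p m) = p k * c := by
    have := hprod (p k); rwa [Function.update_eq_self] at this
  have hPpos : 0 < ∏ m, p m := Finset.prod_pos fun m _ => hp m
  have h1 : HasDerivAt (fun s => ∏ m, Function.update p k s m) c (p k) := by
    simp only [hprod]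
    simpa using (hasDerivAt_id (p k)).mul_const c
  have h2 := h1.sqrt (by rw [hprod, ← hP]; exact hPpos.ne')
  have hfx : (∏ m, Function.update p k (p k) m) = ∏ m, p m := by
    rw [Function.update_eq_self]
  rw [hfx] at h2
  have hss := Real.mul_self_sqrt hPpos.le
  have heq : Real.sqrt (∏ m, p m) / (2 * p k) = c / (2 * Real.sqrt (∏ m, p m)) := by
    rw [div_eq_div_iff (mul_pos two_pos (hp k)).ne' (mul_pos two_pos (Real.sqrt_pos.mpr hPpos)).ne']
    linear_combination 2 * hss + 2 * hP
  rwa [heq]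

lemma sigma_hasDerivAt (σ : (Fin 4 → ℝ) → ℝ) (hσ : ContDiff ℝ (⊤ : ℕ∞) σ) (x : Fin 4 → ℝ) (k : Fin 4) :
    HasDerivAt (fun s => σ (Function.update x k s)) (pd σ k x) (x k) := by
  have hupd : Differentiable ℝ (fun s : ℝ => Function.update x k s) := by
    rw [differentiable_pi]
    intro i
    rcases eq_or_ne i k with rfl | hik
    · simpa [Function.update_self] using differentiable_id
    · simp [Function.update_of_ne hik]
  have hd : DifferentiableAt ℝ (fun s => σ (Function.update x k s)) (x k) :=
    ((hσ.differentiable (by simp)) _).comp _ (hupd _)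
  unfold pd
  exact hd.hasDerivAt

lemma pd_exp_mul (σ : (Fin 4 → ℝ) → ℝ) (hσ : ContDiff ℝ (⊤ : ℕ∞) σ) (x : Fin 4 → ℝ) (k : Fin 4)
    (a c : ℝ) :
    pd (fun x' => Real.exp (a * σ x') * c) k x
      = a * pd σ k x * (Real.exp (a * σ x) * c) := by
  have h0 := sigma_hasDerivAt σ hσ x k
  have h1 := ((h0.const_mul a).exp).mul_const c
  rw [Function.update_eq_self] at h1
  unfold pd
  rw [h1.deriv, h0.deriv]
  ring

lemma pd_Hstar_p (σ : (Fin 4 → ℝ) → ℝ) (h : ℝ → ℝ) (t : ℝ) (x p : Fin 4 → ℝ)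
    (hp : ∀ i, 0 < p i) (k : Fin 4) :
    pd (fun p' => Hstar σ h t x p') k p = Hstar σ h t x p / (2 * p k) := by
  have key := (hasDerivAt_sqrtProd p hp k).const_mul (4 * Real.exp (-2 * σ x) * h t)
  unfold pd Hstar
  rw [key.deriv]
  ring

lemma pd_gdown_p (σ : (Fin 4 → ℝ) → ℝ) (x p : Fin 4 → ℝ) (hp : ∀ i, 0 < p i) (i j k : Fin 4) :
    pd (fun p' => gdown σ x p' i j) k p
      = gdown σ x p i j * (kron k i / p i + kron k j / p j - 1 / (2 * p k)) := by
  have hPpos : 0 < ∏ m, p m := Finset.prod_pos fun m _ => hp m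
  have hSpos : 0 < Real.sqrt (∏ m, p m) := Real.sqrt_pos.mpr hPpos
  have hu := hasDerivAt_update_apply p k i
  have hv := hasDerivAt_update_apply p k j
  have hw := hasDerivAt_sqrtProd p hp k
  have hne : Real.sqrt (∏ m, Function.update p k (p k) m) ≠ 0 := by
    rw [Function.update_eq_self]; exact hSpos.ne'
  have key := ((((hasDerivAt_const (p k)
      (Real.exp (2 * σ x) * (1 - 2 * kron i j) / 2)).mul hu).mul hv).div hw hne)
  simp only [Function.update_eq_self, Pi.mul_apply, Function.update_self] at key
  unfold pd gdown
  erw [key.deriv, div_eq_iff (pow_ne_zero 2 hSpos.ne')]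
  field_simp [(hp i).ne', (hp j).ne', (hp k).ne', hSpos.ne']
  ring_nf

set_option maxHeartbeats 2000000 in
/-- the spatial component of the canonical nonlinear connection
`N_{(i)j}^{(1)} = (h¹¹/4) Σ_k [ (∂g_{ij}/∂x^k)(∂H*/∂p_k) − (∂g_{ij}/∂p_k)(∂H*/∂x^k)
+ g_{ik} ∂²H*/∂x^j∂p_k + g_{jk} ∂²H*/∂x^i∂p_k ]` equals `−4 σ_i(x) p_i δ_{ij}`. -/
theorem stmt_2 (σ : (Fin 4 → ℝ) → ℝ) (hσ : ContDiff ℝ (⊤ : ℕ∞) σ)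
    (h : ℝ → ℝ) (hh : ContDiff ℝ (⊤ : ℕ∞) h) (hhpos : ∀ t, 0 < h t)
    (t : ℝ) (x p : Fin 4 → ℝ) (hp : ∀ i, 0 < p i) (i j : Fin 4) :
    ((h t)⁻¹ / 4) *
      (∑ k, (pd (fun x' => gdown σ x' p i j) k x * pd (fun p' => Hstar σ h t x p') k p
             - pd (fun p' => gdown σ x p' i j) k p * pd (fun x' => Hstar σ h t x' p) k x
             + gdown σ x p i k * pd (fun x' => pd (fun p' => Hstar σ h t x' p') k p) j x
             + gdown σ x p j k * pd (fun x' => pd (fun p' => Hstar σ h t x' p') k p) i x))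
    = -4 * pd σ i x * p i * kron i j := by
  have hPpos : 0 < ∏ m, p m := Finset.prod_pos fun m _ => hp m
  have hSpos : 0 < Real.sqrt (∏ m, p m) := Real.sqrt_pos.mpr hPpos
  have L5 : ∀ (k j' : Fin 4),
      pd (fun x' => pd (fun p' => Hstar σ h t x' p') k p) j' x
        = -2 * pd σ j' x * (Hstar σ h t x p / (2 * p k)) := by
    intro k j'
    have e : (fun x' => pd (fun p' => Hstar σ h t x' p') k p)
        = fun x' => Real.exp ((-2 : ℝ) * σ x')
            * (4 * h t * Real.sqrt (∏ m, p m) / (2 * p k)) := by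
      funext y
      rw [pd_Hstar_p σ h t y p hp k]
      simp only [Hstar]; ring
    rw [e, pd_exp_mul σ hσ x j']
    simp only [Hstar]; ring
  have L1 : ∀ k : Fin 4, pd (fun x' => gdown σ x' p i j) k x
      = 2 * pd σ k x * gdown σ x p i j := by
    intro k
    have e : (fun x' => gdown σ x' p i j)
        = fun x' => Real.exp ((2 : ℝ) * σ x')
            * ((1 - 2 * kron i j) / 2 * p i * p j / Real.sqrt (∏ m, p m)) := by
      funext y; simp only [gdown]; ring
    rw [e, pd_exp_mul σ hσ x k]
    simp only [gdown]; ring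
  have L3 : ∀ k : Fin 4, pd (fun x' => Hstar σ h t x' p) k x
      = -2 * pd σ k x * Hstar σ h t x p := by
    intro k
    have e : (fun x' => Hstar σ h t x' p)
        = fun x' => Real.exp ((-2 : ℝ) * σ x')
            * (4 * h t * Real.sqrt (∏ m, p m)) := by
      funext y; simp only [Hstar]; ring
    rw [e, pd_exp_mul σ hσ x k]
    simp only [Hstar]; ring
  have hm2 : ∀ y : Fin 4 → ℝ, Real.exp (-2 * σ y) = (Real.exp (2 * σ y))⁻¹ := by
    intro y; rw [show (-2 : ℝ) * σ y = -(2 * σ y) by ring, Real.exp_neg]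
  have hht : h t ≠ 0 := (hhpos t).ne'
  have gH : ∀ a b : Fin 4, gdown σ x p a b * Hstar σ h t x p
      = 2 * h t * (1 - 2 * kron a b) * p a * p b := by
    intro a b
    simp only [gdown, Hstar, hm2]
    field_simp
    ring
  have key : ∀ k : Fin 4,
      pd (fun x' => gdown σ x' p i j) k x * pd (fun p' => Hstar σ h t x p') k p
        - pd (fun p' => gdown σ x p' i j) k p * pd (fun x' => Hstar σ h t x' p) k x
        + gdown σ x p i k * pd (fun x' => pd (fun p' => Hstar σ h t x' p') k p) j x
        + gdown σ x p j k * pd (fun x' => pd (fun p' => Hstar σ h t x' p') k p) i x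
      = h t * (4 * pd σ k x * (1 - 2 * kron i j) * p i * p j
            * (kron k i / p i + kron k j / p j)
          - 2 * (1 - 2 * kron i k) * pd σ j x * p i * p k / p k
          - 2 * (1 - 2 * kron j k) * pd σ i x * p j * p k / p k) := by
    intro k
    rw [L5, L5, L1, L3, pd_Hstar_p σ h t x p hp, pd_gdown_p σ x p hp i j]
    linear_combination (2 * pd σ k x * (kron k i / p i + kron k j / p j)) * gH i j
      - (pd σ j x / p k) * gH i k - (pd σ i x / p k) * gH j k
  simp only [key]
  have hht' : h t ≠ 0 := (hhpos t).ne'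
  have h0 : p 0 ≠ 0 := (hp 0).ne'
  have h1 : p 1 ≠ 0 := (hp 1).ne'
  have h2 : p 2 ≠ 0 := (hp 2).ne'
  have h3 : p 3 ≠ 0 := (hp 3).ne'
  simp only [Fin.sum_univ_four]
  clear key gH L1 L3 L5 hm2 hσ hh hhpos hp hPpos hSpos hht
  have hcase : ∀ m : Fin 4, m = 0 ∨ m = 1 ∨ m = 2 ∨ m = 3 := by decide
  rcases hcase i with rfl | rfl | rfl | rfl <;> rcases hcase j with rfl | rfl | rfl | rfl <;>
    (simp only [kron, Fin.reduceEq, reduceIte]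
     field_simp
     ring)
end

section
/- Let y = (y¹,…,y⁴) ∈ ℝ⁴ with all y^i > 0, and set L*(t,x,y) := e^{2σ(x)} h¹¹(t) (y¹y²y³y⁴)^{1/2} and p_i := ∂L*/∂y^i. Then all p_i > 0 and the Legendre relation Σ_{r=1}^{4} p_r y^r − L*(t,x,y) = H*(t,x,p) holds, where H*(t,x,p) := 4 e^{−2σ(x)} h₁₁(t) (p₁p₂p₃p₄)^{1/2}; that is, the (t,x)-conformal deformed quartic Berwald-Moór Hamiltonian H* is the natural Hamiltonian attached to the Lagrangian L*. -/
/-- with `L*(t,x,y) = e^{2σ(x)} h¹¹(t) (y¹y²y³y⁴)^{1/2}` and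
`p_i = ∂L*/∂y^i`, all `p_i > 0` and the Legendre relation
`Σ_r p_r y^r − L*(t,x,y) = H*(t,x,p)` holds, where
`H*(t,x,p) = 4 e^{−2σ(x)} h₁₁(t) (p₁p₂p₃p₄)^{1/2}`. -/
theorem stmt_15 (σ : (Fin 4 → ℝ) → ℝ) (hσ : ContDiff ℝ (⊤ : ℕ∞) σ)
    (h : ℝ → ℝ) (hh : ContDiff ℝ (⊤ : ℕ∞) h) (hhpos : ∀ t, 0 < h t)
    (t : ℝ) (x : Fin 4 → ℝ) (y : Fin 4 → ℝ) (hy : ∀ i, 0 < y i)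
    (p : Fin 4 → ℝ)
    (hpdef : ∀ i, p i =
      pd (fun y' => Real.exp (2 * σ x) * (h t)⁻¹ * Real.sqrt (∏ k, y' k)) i y) :
    (∀ i, 0 < p i) ∧
    (∑ r, p r * y r) - Real.exp (2 * σ x) * (h t)⁻¹ * Real.sqrt (∏ k, y k)
      = 4 * Real.exp (-2 * σ x) * h t * Real.sqrt (∏ k, p k) := by
  set c : ℝ := Real.exp (2 * σ x) * (h t)⁻¹ with hc_def
  have hc : 0 < c := mul_pos (Real.exp_pos _) (inv_pos.mpr (hhpos t))
  set P : ℝ := ∏ k, y k with hP_def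
  have hP : 0 < P := Finset.prod_pos (fun i _ => hy i)
  have hsP : 0 < Real.sqrt P := Real.sqrt_pos.mpr hP
  -- key formula for p
  have key : ∀ i, p i = c * Real.sqrt P / (2 * y i) := by
    intro i
    rw [hpdef i]
    unfold pd
    set A : ℝ := ∏ k ∈ Finset.univ \ {i}, y k with hA_def
    have hA : 0 < A := Finset.prod_pos (fun j _ => hy j)
    have hPA : P = y i * A := by
      rw [hP_def, hA_def, Finset.sdiff_singleton_eq_erase]
      exact (Finset.mul_prod_erase (Finset.univ : Finset (Fin 4)) y (Finset.mem_univ i)).symm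
    have hprod : ∀ s : ℝ, (∏ k, Function.update y i s k) = s * A := by
      intro s
      exact Finset.prod_update_of_mem (Finset.mem_univ i) y s
    have hne : y i * A ≠ 0 := ne_of_gt (mul_pos (hy i) hA)
    have h1 : HasDerivAt (fun s : ℝ => s * A) A (y i) := by
      simpa using (hasDerivAt_id (y i)).mul_const A
    have h2 : HasDerivAt (fun s : ℝ => Real.sqrt (s * A))
        (1 / (2 * Real.sqrt (y i * A)) * A) (y i) :=
      (Real.hasDerivAt_sqrt hne).comp (y i) h1
    have h3 : HasDerivAt (fun s : ℝ => c * Real.sqrt (∏ k, Function.update y i s k))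
        (c * (1 / (2 * Real.sqrt (y i * A)) * A)) (y i) := by
      have := h2.const_mul c
      simpa [hprod] using this
    have h4 : deriv (fun s : ℝ => c * Real.sqrt (∏ k, Function.update y i s k)) (y i)
        = c * (1 / (2 * Real.sqrt (y i * A)) * A) := h3.deriv
    rw [h4]
    have h5 : Real.sqrt P = Real.sqrt (y i) * Real.sqrt A := by
      rw [hPA, Real.sqrt_mul (hy i).le]
    have h6 : Real.sqrt (y i * A) = Real.sqrt (y i) * Real.sqrt A :=
      Real.sqrt_mul (hy i).le A
    have hyy : Real.sqrt (y i) * Real.sqrt (y i) = y i := Real.mul_self_sqrt (hy i).le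
    have haa : Real.sqrt A * Real.sqrt A = A := Real.mul_self_sqrt hA.le
    have hy0 : (0:ℝ) < Real.sqrt (y i) := Real.sqrt_pos.mpr (hy i)
    have ha0 : (0:ℝ) < Real.sqrt A := Real.sqrt_pos.mpr hA
    rw [h5, h6, show (2:ℝ) * y i = 2 * (Real.sqrt (y i) * Real.sqrt (y i)) from by
      rw [hyy]]
    field_simp
    linear_combination (-1 : ℝ) * haa
  have hppos : ∀ i, 0 < p i := by
    intro i
    rw [key i]
    have := hy i
    positivity
  refine ⟨hppos, ?_⟩
  -- sum
  have hsum : (∑ r, p r * y r) = 2 * (c * Real.sqrt P) := by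
    have : ∀ r : Fin 4, p r * y r = c * Real.sqrt P / 2 := by
      intro r
      rw [key r]
      field_simp [(hy r).ne']
    rw [Finset.sum_congr rfl (fun r _ => this r)]
    norm_num
    ring
  -- product
  have hprodp : (∏ k, p k) = (c ^ 2 * Real.sqrt P / 4) ^ 2 := by
    have : (∏ k, p k) = (c * Real.sqrt P) ^ 4 / (2 ^ 4 * P) := by
      simp only [key]
      rw [Finset.prod_div_distrib, Finset.prod_const, Finset.prod_mul_distrib,
        Finset.prod_const]
      simp [← hP_def]
    rw [this]
    have hsq : Real.sqrt P ^ 2 = P := Real.sq_sqrt hP.le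
    field_simp
    nlinarith [hsq, hsP]
  have hsqrtp : Real.sqrt (∏ k, p k) = c ^ 2 * Real.sqrt P / 4 := by
    rw [hprodp, Real.sqrt_sq (by positivity)]
  rw [hsum, hsqrtp]
  have hexp : Real.exp (-2 * σ x) = (Real.exp (2 * σ x))⁻¹ := by
    rw [← Real.exp_neg]; ring_nf
  rw [hc_def, hexp]
  have hh0 : h t ≠ 0 := (hhpos t).ne'
  have he0 : Real.exp (2 * σ x) ≠ 0 := (Real.exp_pos _).ne'
  field_simp
  ring
end
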